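/- Set H := τ·ω° − Φ₁(ω°∣x) and define ReG(w) := −τ·Re(w) + H·log|w| + ∫₀ˣ Re φ̂₀(w/ξ(y)) dy. Then the circle of radius ω° centered at the origin is steep ascent for ReG: for every θ ∈ (0, 2π), one has ReG(ω°·e^{iθ}) > ReG(ω°). -/

import Mathlib

/-!
On the circle `|w| = ω` the `log` term of `ReG` is constant. For `r = ω / ξ(y) < 1` the series
`Re φ̂₀(r e^{iθ}) = Σ_{k ≥ 1} cos(kθ) r^k / (1 - q^k)` converges absolutely, and `τ ω = Φ₂(ω ∣ x)`
absorbs the `-τ Re w` term, so that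
`ReG(ω e^{iθ}) - ReG(ω) = ∫₀ˣ Σ_k (cos(kθ) - 1 + k² (1 - cos θ)) r^k / (1 - q^k) dy`.
Every coefficient is nonnegative because `|sin(kt)| ≤ k |sin t|` gives
`1 - cos(kθ) ≤ k² (1 - cos θ)`, and the one at `k = 2` is `2 (1 - cos θ)² > 0`.
-/

open MeasureTheory Filter

/-- `φ_n(w) = Σ_{k≥1} k^n w^k/(1-q^k)` as a real function. -/
noncomputable def phiR (q : ℝ) (n : ℕ) (w : ℝ) : ℝ :=
  ∑' k : ℕ, ((k : ℝ) + 1) ^ n * w ^ (k + 1) / (1 - q ^ (k + 1))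

/-- `Φ_n(w∣x) = ∫₀ˣ φ_n(w/ξ(y)) dy`. -/
noncomputable def PhiI (q : ℝ) (n : ℕ) (ξ : ℝ → ℝ) (x w : ℝ) : ℝ :=
  ∫ y in Set.Ioo 0 x, phiR q n (w / ξ y)

/-- `τ_e(x) = ∫₀ˣ dy/((1-q)ξ(y))`. -/
noncomputable def tauE (q : ℝ) (ξ : ℝ → ℝ) (x : ℝ) : ℝ :=
  ∫ y in Set.Ioo 0 x, 1 / ((1 - q) * ξ y)

/-- `φ̂₀(z) = Σ_{i≥0} qⁱz/(1−qⁱz)`, the analytic continuation of `φ₀`. -/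
noncomputable def phiHat (q : ℝ) (z : ℂ) : ℂ :=
  ∑' i : ℕ, (q : ℂ) ^ i * z / (1 - (q : ℂ) ^ i * z)

/-- The real part of the steepest descent function:
`ReG(w) = −τ·Re w + H·log|w| + ∫₀ˣ Re φ̂₀(w/ξ(y)) dy`. -/
noncomputable def ReG (q τ H x : ℝ) (ξ : ℝ → ℝ) (w : ℂ) : ℝ :=
  -τ * w.re + H * Real.log ‖w‖
    + ∫ y in Set.Ioo 0 x, (phiHat q (w / (ξ y : ℂ))).re

namespace Real

theorem abs_sin_nat_mul_le (n : ℕ) (t : ℝ) : |sin (n * t)| ≤ n * |sin t| := by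
  induction n with
  | zero => simp
  | succ n ih =>
    rw [Nat.cast_succ, add_one_mul, sin_add]
    calc |sin (n * t) * cos t + cos (n * t) * sin t| ≤ |sin (n * t)| + |sin t| := by
          refine (abs_add_le _ _).trans (add_le_add ?_ ?_) <;> rw [abs_mul]
          · exact mul_le_of_le_one_right (abs_nonneg _) (abs_cos_le_one t)
          · exact mul_le_of_le_one_left (abs_nonneg _) (abs_cos_le_one _)
      _ ≤ n * |sin t| + |sin t| := by linarith
      _ = (n + 1) * |sin t| := by ring

theorem one_sub_cos_nat_mul_le (n : ℕ) (t : ℝ) : 1 - cos (n * t) ≤ n ^ 2 * (1 - cos t) := by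
  have half (s : ℝ) : 1 - cos (2 * s) = 2 * |sin s| ^ 2 := by
    rw [cos_two_mul_eq_one_sub, sq_abs]; ring
  calc 1 - cos (n * t) = 2 * |sin (n * (t / 2))| ^ 2 := by rw [← half]; ring_nf
    _ ≤ 2 * (n * |sin (t / 2)|) ^ 2 := by gcongr; exact abs_sin_nat_mul_le n (t / 2)
    _ = n ^ 2 * (1 - cos t) := by rw [show t = 2 * (t / 2) by ring, half]; ring_nf

theorem cos_lt_one_of_mem_Ioo {θ : ℝ} (hθ : θ ∈ Set.Ioo 0 (2 * π)) : cos θ < 1 :=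
  (cos_le_one θ).lt_of_ne fun h => hθ.1.ne' <|
    (cos_eq_one_iff_of_lt_of_lt (by linarith [pi_pos, hθ.1]) hθ.2).1 h

end Real

noncomputable def qSeries (q : ℝ) (c : ℕ → ℝ) (r : ℝ) : ℝ :=
  ∑' k : ℕ, c k * r ^ (k + 1) / (1 - q ^ (k + 1))

theorem phiR_eq_qSeries (q : ℝ) (n : ℕ) : phiR q n = qSeries q (fun k => ((k : ℝ) + 1) ^ n) :=
  rfl

theorem measurable_qSeries (q : ℝ) (c : ℕ → ℝ) : Measurable (qSeries q c) :=
  Measurable.tsum fun k => by fun_prop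

section qSeries

variable {q : ℝ} {c : ℕ → ℝ} {C : ℝ} {n : ℕ}

theorem one_sub_pow_succ_pos (hq : q ∈ Set.Ioo (0 : ℝ) 1) (k : ℕ) : 0 < 1 - q ^ (k + 1) :=
  sub_pos.2 (pow_lt_one₀ hq.1.le hq.2 k.succ_ne_zero)

theorem abs_qSeries_term_le (hq : q ∈ Set.Ioo (0 : ℝ) 1) (k : ℕ) (r : ℝ) :
    |c k * r ^ (k + 1) / (1 - q ^ (k + 1))| ≤ (1 - q)⁻¹ * (|c k| * |r| ^ (k + 1)) := by
  have hk := one_sub_pow_succ_pos hq k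
  rw [abs_div, abs_mul, abs_pow, abs_of_pos hk, div_eq_inv_mul]
  gcongr
  · linarith [hq.2]
  · exact pow_le_of_le_one hq.1.le hq.2.le k.succ_ne_zero

theorem summable_qSeries (hq : q ∈ Set.Ioo (0 : ℝ) 1) (hc : ∀ k, |c k| ≤ C * ((k : ℝ) + 1) ^ n)
    {r : ℝ} (hr : |r| < 1) : Summable fun k => c k * r ^ (k + 1) / (1 - q ^ (k + 1)) := by
  have hgeom : Summable fun k : ℕ => ((k : ℝ) + 1) ^ n * |r| ^ (k + 1) := by
    have := (summable_nat_add_iff 1).2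
      (summable_pow_mul_geometric_of_norm_lt_one (R := ℝ) n (r := |r|) (by simpa using hr))
    simpa using this
  refine .of_norm_bounded ((hgeom.mul_left C).mul_left (1 - q)⁻¹) fun k => ?_
  refine (abs_qSeries_term_le hq k r).trans ?_
  have hq1 : 0 ≤ (1 - q)⁻¹ := inv_nonneg.2 (sub_nonneg.2 hq.2.le)
  rw [← mul_assoc C]
  gcongr
  exact hc k

theorem abs_qSeries_le (hq : q ∈ Set.Ioo (0 : ℝ) 1) (hc : ∀ k, |c k| ≤ C * ((k : ℝ) + 1) ^ n)
    {ρ r : ℝ} (hρ : ρ < 1) (hr : |r| ≤ ρ) : |qSeries q c r| ≤ qSeries q (fun k => |c k|) ρ := by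
  have hρ0 : 0 ≤ ρ := (abs_nonneg r).trans hr
  have hc' : ∀ k, |(fun k => |c k|) k| ≤ C * ((k : ℝ) + 1) ^ n := by simpa using hc
  rw [← Real.norm_eq_abs]
  refine tsum_of_norm_bounded (summable_qSeries hq hc' (by rwa [abs_of_nonneg hρ0])).hasSum
    fun k => ?_
  have hk := one_sub_pow_succ_pos hq k
  rw [Real.norm_eq_abs, abs_div, abs_mul, abs_pow, abs_of_pos hk]
  gcongr

theorem integrable_qSeries_comp {α : Type*} [MeasurableSpace α] {μ : Measure α}
    [IsFiniteMeasure μ] (hq : q ∈ Set.Ioo (0 : ℝ) 1) (hc : ∀ k, |c k| ≤ C * ((k : ℝ) + 1) ^ n)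
    {f : α → ℝ} (hf : AEMeasurable f μ) {ρ : ℝ} (hρ : ρ < 1) (hfρ : ∀ᵐ a ∂μ, |f a| ≤ ρ) :
    Integrable (fun a => qSeries q c (f a)) μ :=
  (integrable_const _).mono' ((measurable_qSeries q c).comp_aemeasurable hf).aestronglyMeasurable
    (hfρ.mono fun _ ha => abs_qSeries_le hq hc hρ ha)

theorem mul_phiR_two_lt_qSeries_cos_sub (hq : q ∈ Set.Ioo (0 : ℝ) 1) {r t : ℝ} (hr0 : 0 < r)
    (hr1 : r < 1) (ht : Real.cos t < 1) :
    (Real.cos t - 1) * phiR q 2 r < qSeries q (fun k => Real.cos ((k + 1) * t)) r - phiR q 0 r := by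
  have hr : |r| < 1 := by rwa [abs_of_pos hr0]
  set g : ℕ → ℝ := fun k =>
    Real.cos ((k + 1) * t) - ((k : ℝ) + 1) ^ 0 - (Real.cos t - 1) * ((k : ℝ) + 1) ^ 2
  have hA := summable_qSeries hq (C := 1) (n := 0)
    (c := fun k => Real.cos ((k + 1) * t)) (fun k => by simpa using Real.abs_cos_le_one _) hr
  have hB := summable_qSeries hq (C := 1) (n := 0)
    (c := fun k => ((k : ℝ) + 1) ^ 0) (fun k => by simp) hr
  have hC := (summable_qSeries hq (C := 1) (n := 2)
    (c := fun k => ((k : ℝ) + 1) ^ 2) (fun k => by simp) hr).mul_left (Real.cos t - 1)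
  have hsplit : ∀ k : ℕ, g k * r ^ (k + 1) / (1 - q ^ (k + 1)) =
      Real.cos ((k + 1) * t) * r ^ (k + 1) / (1 - q ^ (k + 1))
        - ((k : ℝ) + 1) ^ 0 * r ^ (k + 1) / (1 - q ^ (k + 1))
        - (Real.cos t - 1) * (((k : ℝ) + 1) ^ 2 * r ^ (k + 1) / (1 - q ^ (k + 1))) := fun k => by
    ring
  have hg : Summable fun k => g k * r ^ (k + 1) / (1 - q ^ (k + 1)) :=
    ((hA.sub hB).sub hC).congr fun k => (hsplit k).symm
  have hgap : qSeries q (fun k => Real.cos ((k + 1) * t)) r - phiR q 0 r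
      - (Real.cos t - 1) * phiR q 2 r = qSeries q g r := by
    simp only [qSeries, phiR]
    rw [tsum_congr hsplit, (hA.sub hB).tsum_sub hC, hA.tsum_sub hB, tsum_mul_left]
  have hg_nonneg : ∀ k, 0 ≤ g k * r ^ (k + 1) / (1 - q ^ (k + 1)) := fun k => by
    have hcos_k := Real.one_sub_cos_nat_mul_le (k + 1) t
    push_cast at hcos_k
    have hk := one_sub_pow_succ_pos hq k
    have hgk : 0 ≤ g k := by simp only [g]; linarith
    positivity
  have hg_one : 0 < g 1 * r ^ 2 / (1 - q ^ 2) := by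
    have hg1 : g 1 = 2 * (1 - Real.cos t) ^ 2 := by
      simp only [g]; rw [show ((1 : ℕ) : ℝ) + 1 = 2 by norm_num, Real.cos_two_mul]; ring
    have h1 := one_sub_pow_succ_pos hq 1
    have ht' : 0 < 1 - Real.cos t := by linarith
    rw [hg1]
    positivity
  have hpos : 0 < qSeries q g r := hg.tsum_pos hg_nonneg 1 hg_one
  linarith

theorem phiHat_eq_tsum (hq : q ∈ Set.Ioo (0 : ℝ) 1) {z : ℂ} (hz : ‖z‖ < 1) :
    phiHat q z = ∑' k : ℕ, z ^ (k + 1) / (1 - (q : ℂ) ^ (k + 1)) := by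
  have hq_norm : ‖(q : ℂ)‖ = q := by simp [abs_of_pos hq.1]
  have geom {w : ℂ} (hw : ‖w‖ < 1) : w / (1 - w) = ∑' k : ℕ, w ^ (k + 1) := by
    simp_rw [pow_succ', tsum_mul_left, tsum_geometric_of_norm_lt_one hw, div_eq_mul_inv]
  have hqz (i : ℕ) : ‖(q : ℂ) ^ i * z‖ < 1 := by
    rw [norm_mul, norm_pow, hq_norm]
    exact lt_of_le_of_lt (mul_le_of_le_one_left (norm_nonneg z) (pow_le_one₀ hq.1.le hq.2.le)) hz
  have hsum : Summable (Function.uncurry fun i k : ℕ => ((q : ℂ) ^ i * z) ^ (k + 1)) := by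
    refine .of_norm_bounded (g := fun p : ℕ × ℕ => q ^ p.1 * ‖z‖ ^ (p.2 + 1))
      ((summable_geometric_of_lt_one hq.1.le hq.2).mul_of_nonneg
        ((summable_nat_add_iff 1).2 (summable_geometric_of_lt_one (norm_nonneg z) hz))
        (fun i => pow_nonneg hq.1.le i) (fun k => pow_nonneg (norm_nonneg z) _)) fun ⟨i, k⟩ => ?_
    rw [Function.uncurry_apply_pair, norm_pow, norm_mul, norm_pow, hq_norm, mul_pow, ← pow_mul]
    exact mul_le_mul_of_nonneg_right
      (pow_le_pow_of_le_one hq.1.le hq.2.le (Nat.le_mul_of_pos_right i k.succ_pos)) (by positivity)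
  rw [phiHat, tsum_congr fun i => geom (hqz i), ← hsum.tsum_comm]
  refine tsum_congr fun k => ?_
  have hqk : ‖(q : ℂ) ^ (k + 1)‖ < 1 := by
    rw [norm_pow, hq_norm]; exact pow_lt_one₀ hq.1.le hq.2 k.succ_ne_zero
  simp_rw [mul_pow, ← pow_mul, mul_comm _ (k + 1), pow_mul, tsum_mul_right,
    tsum_geometric_of_norm_lt_one hqk, div_eq_inv_mul]

theorem re_phiHat_ofReal_mul_exp (hq : q ∈ Set.Ioo (0 : ℝ) 1) {r : ℝ} (hr : |r| < 1) (t : ℝ) :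
    (phiHat q (r * Complex.exp (t * Complex.I))).re =
      qSeries q (fun k => Real.cos ((k + 1) * t)) r := by
  have hz : ‖(r : ℂ) * Complex.exp (t * Complex.I)‖ = |r| := by
    simp [Complex.norm_exp_ofReal_mul_I]
  have hden (k : ℕ) : (1 : ℂ) - (q : ℂ) ^ (k + 1) = ((1 - q ^ (k + 1) : ℝ) : ℂ) := by
    push_cast; ring
  have hpow (k : ℕ) : ((r : ℂ) * Complex.exp (t * Complex.I)) ^ (k + 1) =
      (r ^ (k + 1) : ℝ) * Complex.exp (((k + 1) * t : ℝ) * Complex.I) := by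
    rw [mul_pow, ← Complex.exp_nat_mul]; push_cast; ring_nf
  have hsum : Summable fun k : ℕ =>
      ((r : ℂ) * Complex.exp (t * Complex.I)) ^ (k + 1) / (1 - (q : ℂ) ^ (k + 1)) := by
    refine .of_norm_bounded (summable_qSeries hq (c := 1) (C := 1) (n := 0) (fun k => by simp)
      (r := |r|) (by rwa [abs_abs])) fun k => le_of_eq ?_
    rw [hden, norm_div, norm_pow, hz, Complex.norm_real, Real.norm_eq_abs,
      abs_of_pos (one_sub_pow_succ_pos hq k), Pi.one_apply, one_mul]
  rw [phiHat_eq_tsum hq (hz ▸ hr), Complex.re_tsum hsum, qSeries]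
  refine tsum_congr fun k => ?_
  rw [hpow, hden, Complex.div_ofReal_re, Complex.re_ofReal_mul, Complex.exp_ofReal_mul_I_re]
  ring

theorem re_phiHat_ofReal (hq : q ∈ Set.Ioo (0 : ℝ) 1) {r : ℝ} (hr : |r| < 1) :
    (phiHat q r).re = phiR q 0 r := by
  simpa [phiR_eq_qSeries] using re_phiHat_ofReal_mul_exp hq hr 0

end qSeries

theorem MeasureTheory.integral_pos_of_ae_pos {α : Type*} [MeasurableSpace α] {μ : Measure α}
    (hμ : μ ≠ 0) {f : α → ℝ} (hf : ∀ᵐ a ∂μ, 0 < f a) (hfi : Integrable f μ) :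
    0 < ∫ a, f a ∂μ := by
  have hsupp : ∀ᵐ a ∂μ, a ∈ Function.support f := hf.mono fun _ h => h.ne'
  rw [integral_pos_iff_support_of_nonneg_ae (hf.mono fun _ h => h.le) hfi,
    measure_congr ((ae_eq_univ (s := Function.support f)).2 hsupp)]
  exact Measure.measure_univ_pos.2 hμ

theorem mul_integral_phiR_two_lt_integral_re_phiHat_sub {α : Type*} [MeasurableSpace α]
    {μ : Measure α} [IsFiniteMeasure μ] (hμ : μ ≠ 0) {q : ℝ} (hq : q ∈ Set.Ioo (0 : ℝ) 1)
    {f : α → ℝ} (hf : AEMeasurable f μ) {ρ : ℝ} (hρ : ρ < 1)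
    (hfρ : ∀ᵐ a ∂μ, 0 < f a ∧ f a ≤ ρ) {θ : ℝ} (hθ : Real.cos θ < 1) :
    (Real.cos θ - 1) * ∫ a, phiR q 2 (f a) ∂μ <
      (∫ a, (phiHat q (f a * Complex.exp (θ * Complex.I))).re ∂μ)
        - ∫ a, (phiHat q (f a)).re ∂μ := by
  have hf_abs : ∀ᵐ a ∂μ, |f a| ≤ ρ := hfρ.mono fun a h => by rw [abs_of_pos h.1]; exact h.2
  have hf_lt : ∀ᵐ a ∂μ, |f a| < 1 := hf_abs.mono fun a h => h.trans_lt hρ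
  have hint {c : ℕ → ℝ} {n : ℕ} (hc : ∀ k, |c k| ≤ 1 * ((k : ℝ) + 1) ^ n) :
      Integrable (fun a => qSeries q c (f a)) μ :=
    integrable_qSeries_comp hq hc hf hρ hf_abs
  have hA := hint (c := fun k => Real.cos ((k + 1) * θ)) (n := 0)
    fun k => by simpa using Real.abs_cos_le_one _
  have hB : Integrable (fun a => phiR q 0 (f a)) μ := hint (n := 0) fun k => by simp
  have hC : Integrable (fun a => phiR q 2 (f a)) μ := hint (n := 2) fun k => by simp
  have hpos : 0 < ∫ a, qSeries q (fun k => Real.cos ((k + 1) * θ)) (f a) - phiR q 0 (f a)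
      - (Real.cos θ - 1) * phiR q 2 (f a) ∂μ :=
    integral_pos_of_ae_pos hμ (hfρ.mono fun a h => sub_pos.2 <|
      mul_phiR_two_lt_qSeries_cos_sub hq h.1 (h.2.trans_lt hρ) hθ)
      ((hA.sub hB).sub (hC.const_mul _))
  rw [integral_sub, integral_sub hA hB, integral_const_mul] at hpos
  · rw [integral_congr_ae (hf_lt.mono fun a h => re_phiHat_ofReal_mul_exp hq h θ),
      integral_congr_ae (hf_lt.mono fun a h => re_phiHat_ofReal hq h)]
    linarith
  · exact hA.sub hB
  · exact hC.const_mul _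

theorem ReG_ofReal (q τ H x : ℝ) (ξ : ℝ → ℝ) (ω : ℝ) :
    ReG q τ H x ξ ω = -τ * ω + H * Real.log |ω|
      + ∫ y in Set.Ioo 0 x, (phiHat q (ω / ξ y : ℝ)).re := by
  simp [ReG]

theorem ReG_ofReal_mul_exp (q τ H x : ℝ) (ξ : ℝ → ℝ) (ω θ : ℝ) :
    ReG q τ H x ξ (ω * Complex.exp (Complex.I * θ)) = -τ * (ω * Real.cos θ) + H * Real.log |ω|
      + ∫ y in Set.Ioo 0 x, (phiHat q ((ω / ξ y : ℝ) * Complex.exp (θ * Complex.I))).re := by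
  rw [ReG, mul_comm Complex.I, Complex.re_ofReal_mul, Complex.exp_ofReal_mul_I_re, norm_mul,
    Complex.norm_exp_ofReal_mul_I, mul_one, Complex.norm_real, Real.norm_eq_abs]
  congr 3 with y
  push_cast
  ring_nf

theorem stmt_11_general (q : ℝ) (hq : q ∈ Set.Ioo (0:ℝ) 1) (x : ℝ) (hx : 0 < x)
    (ξ : ℝ → ℝ) (hmeas : Measurable ξ) (m M : ℝ)
    (hbound : ∀ᵐ y ∂(volume.restrict (Set.Ioo 0 x)), m ≤ ξ y ∧ ξ y ≤ M)
    (Wo : ℝ) (hWo : Wo = essInf ξ (volume.restrict (Set.Ioo 0 x)))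
    (τ : ℝ)
    (ω : ℝ) (hωmem : ω ∈ Set.Ioo 0 Wo) (hωeq : τ * ω = PhiI q 2 ξ x ω)
    (H : ℝ) :
    ∀ θ : ℝ, θ ∈ Set.Ioo 0 (2 * Real.pi) →
      ReG q τ H x ξ (ω : ℂ) < ReG q τ H x ξ ((ω : ℂ) * Complex.exp (Complex.I * (θ : ℂ))) := by
  intro θ hθ
  obtain ⟨hω0, hωW⟩ := hωmem
  have hWo0 : 0 < Wo := hω0.trans hωW
  have hWo_le : ∀ᵐ y ∂(volume.restrict (Set.Ioo 0 x)), Wo ≤ ξ y :=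
    hWo ▸ ae_essInf_le ⟨m, eventually_map.2 (hbound.mono fun _ h => h.1)⟩
  have hr : ∀ᵐ y ∂(volume.restrict (Set.Ioo 0 x)), 0 < ω / ξ y ∧ ω / ξ y ≤ ω / Wo :=
    hWo_le.mono fun y hy =>
      ⟨div_pos hω0 (hWo0.trans_le hy), div_le_div_of_nonneg_left hω0.le hWo0 hy⟩
  have key := mul_integral_phiR_two_lt_integral_re_phiHat_sub (by simpa using hx) hq
    (hmeas.const_div ω).aemeasurable ((div_lt_one hWo0).2 hωW) hr
    (Real.cos_lt_one_of_mem_Ioo hθ)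
  rw [show ∫ y in Set.Ioo 0 x, phiR q 2 (ω / ξ y) = τ * ω from hωeq.symm] at key
  rw [ReG_ofReal, ReG_ofReal_mul_exp]
  linarith

theorem stmt_11 (q : ℝ) (hq : q ∈ Set.Ioo (0:ℝ) 1) (x : ℝ) (hx : 0 < x)
    (ξ : ℝ → ℝ) (hmeas : Measurable ξ) (m M : ℝ) (hm : 0 < m)
    (hbound : ∀ᵐ y ∂(volume.restrict (Set.Ioo 0 x)), m ≤ ξ y ∧ ξ y ≤ M)
    (Wo : ℝ) (hWo : Wo = essInf ξ (volume.restrict (Set.Ioo 0 x)))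
    (hblow : Tendsto (fun w => PhiI q 2 ξ x w) (nhdsWithin Wo (Set.Iio Wo)) atTop)
    (τ : ℝ) (hτ : tauE q ξ x < τ)
    (ω : ℝ) (hωmem : ω ∈ Set.Ioo 0 Wo) (hωeq : τ * ω = PhiI q 2 ξ x ω)
    (H : ℝ) (hH : H = τ * ω - PhiI q 1 ξ x ω) :
    ∀ θ : ℝ, θ ∈ Set.Ioo 0 (2 * Real.pi) →
      ReG q τ H x ξ (ω : ℂ) < ReG q τ H x ξ ((ω : ℂ) * Complex.exp (Complex.I * (θ : ℂ))) :=
  stmt_11_general q hq x hx ξ hmeas m M hbound Wo hWo τ ω hωmem hωeq H
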